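/- For every h > 0 one has q(h) > 0, where q(h) := 9cosh(4h) − 36h·sinh(4h) + 18h²·cosh(4h) + 9h⁴·cosh(4h) + 72h³·sinh(2h) − 12h³·sinh(4h) + 24h⁵·sinh(2h) + 54h² + 39h⁴ + 8h⁶ − 9. -/

import Mathlib

/-- The auxiliary function `q`. -/
noncomputable def q (h : ℝ) : ℝ :=
  9 * Real.cosh (4 * h) - 36 * h * Real.sinh (4 * h) + 18 * h ^ 2 * Real.cosh (4 * h)
    + 9 * h ^ 4 * Real.cosh (4 * h) + 72 * h ^ 3 * Real.sinh (2 * h)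
    - 12 * h ^ 3 * Real.sinh (4 * h) + 24 * h ^ 5 * Real.sinh (2 * h)
    + 54 * h ^ 2 + 39 * h ^ 4 + 8 * h ^ 6 - 9

noncomputable def Q1 (h : ℝ) : ℝ := -108 * h * Real.cosh (4 * h) + -12 * h ^ 3 * Real.cosh (4 * h) + 36 * h ^ 2 * Real.sinh (4 * h) + 36 * h ^ 4 * Real.sinh (4 * h) + 144 * h ^ 3 * Real.cosh (2 * h) + 48 * h ^ 5 * Real.cosh (2 * h) + 216 * h ^ 2 * Real.sinh (2 * h) + 120 * h ^ 4 * Real.sinh (2 * h) + 108 * h + 156 * h ^ 3 + 48 * h ^ 5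

noncomputable def Q2 (h : ℝ) : ℝ := -108 * Real.cosh (4 * h) + 108 * h ^ 2 * Real.cosh (4 * h) + 144 * h ^ 4 * Real.cosh (4 * h) + -360 * h * Real.sinh (4 * h) + 96 * h ^ 3 * Real.sinh (4 * h) + 864 * h ^ 2 * Real.cosh (2 * h) + 480 * h ^ 4 * Real.cosh (2 * h) + 432 * h * Real.sinh (2 * h) + 768 * h ^ 3 * Real.sinh (2 * h) + 96 * h ^ 5 * Real.sinh (2 * h) + 108 + 468 * h ^ 2 + 240 * h ^ 4

noncomputable def Q3 (h : ℝ) : ℝ := -1224 * h * Real.cosh (4 * h) + 960 * h ^ 3 * Real.cosh (4 * h) + -792 * Real.sinh (4 * h) + 720 * h ^ 2 * Real.sinh (4 * h) + 576 * h ^ 4 * Real.sinh (4 * h) + 2592 * h * Real.cosh (2 * h) + 3456 * h ^ 3 * Real.cosh (2 * h) + 192 * h ^ 5 * Real.cosh (2 * h) + 432 * Real.sinh (2 * h) + 4032 * h ^ 2 * Real.sinh (2 * h) + 1440 * h ^ 4 * Real.sinh (2 * h) + 936 * h + 960 * h ^ 3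

noncomputable def Q4 (h : ℝ) : ℝ := -4392 * Real.cosh (4 * h) + 5760 * h ^ 2 * Real.cosh (4 * h) + 2304 * h ^ 4 * Real.cosh (4 * h) + -3456 * h * Real.sinh (4 * h) + 6144 * h ^ 3 * Real.sinh (4 * h) + 3456 * Real.cosh (2 * h) + 18432 * h ^ 2 * Real.cosh (2 * h) + 3840 * h ^ 4 * Real.cosh (2 * h) + 13248 * h * Real.sinh (2 * h) + 12672 * h ^ 3 * Real.sinh (2 * h) + 384 * h ^ 5 * Real.sinh (2 * h) + 936 + 2880 * h ^ 2

noncomputable def Q5 (h : ℝ) : ℝ := -2304 * h * Real.cosh (4 * h) + 33792 * h ^ 3 * Real.cosh (4 * h) + -21024 * Real.sinh (4 * h) + 41472 * h ^ 2 * Real.sinh (4 * h) + 9216 * h ^ 4 * Real.sinh (4 * h) + 63360 * h * Real.cosh (2 * h) + 40704 * h ^ 3 * Real.cosh (2 * h) + 768 * h ^ 5 * Real.cosh (2 * h) + 20160 * Real.sinh (2 * h) + 74880 * h ^ 2 * Real.sinh (2 * h) + 9600 * h ^ 4 * Real.sinh (2 * h) + 5760 * h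

noncomputable def Q6 (h : ℝ) : ℝ := -86400 * Real.cosh (4 * h) + 267264 * h ^ 2 * Real.cosh (4 * h) + 36864 * h ^ 4 * Real.cosh (4 * h) + 73728 * h * Real.sinh (4 * h) + 172032 * h ^ 3 * Real.sinh (4 * h) + 103680 * Real.cosh (2 * h) + 271872 * h ^ 2 * Real.cosh (2 * h) + 23040 * h ^ 4 * Real.cosh (2 * h) + 276480 * h * Real.sinh (2 * h) + 119808 * h ^ 3 * Real.sinh (2 * h) + 1536 * h ^ 5 * Real.sinh (2 * h) + 5760

noncomputable def Q7 (h : ℝ) : ℝ := 829440 * h * Real.cosh (4 * h) + 835584 * h ^ 3 * Real.cosh (4 * h) + -271872 * Real.sinh (4 * h) + 1585152 * h ^ 2 * Real.sinh (4 * h) + 147456 * h ^ 4 * Real.sinh (4 * h) + 1096704 * h * Real.cosh (2 * h) + 331776 * h ^ 3 * Real.cosh (2 * h) + 3072 * h ^ 5 * Real.cosh (2 * h) + 483840 * Real.sinh (2 * h) + 903168 * h ^ 2 * Real.sinh (2 * h) + 53760 * h ^ 4 * Real.sinh (2 * h)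

noncomputable def Q8 (h : ℝ) : ℝ := -258048 * Real.cosh (4 * h) + 8847360 * h ^ 2 * Real.cosh (4 * h) + 589824 * h ^ 4 * Real.cosh (4 * h) + 6488064 * h * Real.sinh (4 * h) + 3932160 * h ^ 3 * Real.sinh (4 * h) + 2064384 * Real.cosh (2 * h) + 2801664 * h ^ 2 * Real.cosh (2 * h) + 122880 * h ^ 4 * Real.cosh (2 * h) + 3999744 * h * Real.sinh (2 * h) + 878592 * h ^ 3 * Real.sinh (2 * h) + 6144 * h ^ 5 * Real.sinh (2 * h)

noncomputable def Q9 (h : ℝ) : ℝ := 43646976 * h * Real.cosh (4 * h) + 18087936 * h ^ 3 * Real.cosh (4 * h) + 5455872 * Real.sinh (4 * h) + 47185920 * h ^ 2 * Real.sinh (4 * h) + 2359296 * h ^ 4 * Real.sinh (4 * h) + 13602816 * h * Real.cosh (2 * h) + 2248704 * h ^ 3 * Real.cosh (2 * h) + 12288 * h ^ 5 * Real.cosh (2 * h) + 8128512 * Real.sinh (2 * h) + 8239104 * h ^ 2 * Real.sinh (2 * h) + 276480 * h ^ 4 * Real.sinh (2 * h)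

lemma hCosh (a x : ℝ) : HasDerivAt (fun h : ℝ => Real.cosh (a * h)) (a * Real.sinh (a * x)) x := by
  simpa [mul_comm, Function.comp_def] using (Real.hasDerivAt_cosh (a * x)).comp x ((hasDerivAt_id x).const_mul a)

lemma hSinh (a x : ℝ) : HasDerivAt (fun h : ℝ => Real.sinh (a * h)) (a * Real.cosh (a * x)) x := by
  simpa [mul_comm, Function.comp_def] using (Real.hasDerivAt_sinh (a * x)).comp x ((hasDerivAt_id x).const_mul a)

lemma hasDerivAt_q (x : ℝ) : HasDerivAt q (Q1 x) x := by
  have hC4 := hCosh 4 x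
  have hS4 := hSinh 4 x
  have hC2 := hCosh 2 x
  have hS2 := hSinh 2 x
  have H := (((((((((((hC4.const_mul (9:ℝ)).add (((hasDerivAt_pow 2 x).const_mul (18:ℝ)).mul hC4)).add (((hasDerivAt_pow 4 x).const_mul (9:ℝ)).mul hC4)).add (((hasDerivAt_id x).const_mul (-36:ℝ)).mul hS4)).add (((hasDerivAt_pow 3 x).const_mul (-12:ℝ)).mul hS4)).add (((hasDerivAt_pow 3 x).const_mul (72:ℝ)).mul hS2)).add (((hasDerivAt_pow 5 x).const_mul (24:ℝ)).mul hS2)).add (hasDerivAt_const x (-9:ℝ))).add ((hasDerivAt_pow 2 x).const_mul (54:ℝ))).add ((hasDerivAt_pow 4 x).const_mul (39:ℝ))).add ((hasDerivAt_pow 6 x).const_mul (8:ℝ)))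
  have hfun : q = fun h : ℝ => 9 * Real.cosh (4 * h) + 18 * h ^ 2 * Real.cosh (4 * h) + 9 * h ^ 4 * Real.cosh (4 * h) + -36 * h * Real.sinh (4 * h) + -12 * h ^ 3 * Real.sinh (4 * h) + 72 * h ^ 3 * Real.sinh (2 * h) + 24 * h ^ 5 * Real.sinh (2 * h) + -9 + 54 * h ^ 2 + 39 * h ^ 4 + 8 * h ^ 6 := by
    funext h; simp only [q]; ring
  rw [hfun]
  exact H.congr_deriv (by simp only [Q1, id_eq]; push_cast; ring)

lemma hasDerivAt_Q1 (x : ℝ) : HasDerivAt Q1 (Q2 x) x := by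
  have hC4 := hCosh 4 x
  have hS4 := hSinh 4 x
  have hC2 := hCosh 2 x
  have hS2 := hSinh 2 x
  have H := (((((((((((((hasDerivAt_id x).const_mul (-108:ℝ)).mul hC4).add (((hasDerivAt_pow 3 x).const_mul (-12:ℝ)).mul hC4)).add (((hasDerivAt_pow 2 x).const_mul (36:ℝ)).mul hS4)).add (((hasDerivAt_pow 4 x).const_mul (36:ℝ)).mul hS4)).add (((hasDerivAt_pow 3 x).const_mul (144:ℝ)).mul hC2)).add (((hasDerivAt_pow 5 x).const_mul (48:ℝ)).mul hC2)).add (((hasDerivAt_pow 2 x).const_mul (216:ℝ)).mul hS2)).add (((hasDerivAt_pow 4 x).const_mul (120:ℝ)).mul hS2)).add ((hasDerivAt_id x).const_mul (108:ℝ))).add ((hasDerivAt_pow 3 x).const_mul (156:ℝ))).add ((hasDerivAt_pow 5 x).const_mul (48:ℝ)))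
  exact H.congr_deriv (by simp only [Q2, id_eq]; push_cast; ring)

lemma hasDerivAt_Q2 (x : ℝ) : HasDerivAt Q2 (Q3 x) x := by
  have hC4 := hCosh 4 x
  have hS4 := hSinh 4 x
  have hC2 := hCosh 2 x
  have hS2 := hSinh 2 x
  have H := (((((((((((((hC4.const_mul (-108:ℝ)).add (((hasDerivAt_pow 2 x).const_mul (108:ℝ)).mul hC4)).add (((hasDerivAt_pow 4 x).const_mul (144:ℝ)).mul hC4)).add (((hasDerivAt_id x).const_mul (-360:ℝ)).mul hS4)).add (((hasDerivAt_pow 3 x).const_mul (96:ℝ)).mul hS4)).add (((hasDerivAt_pow 2 x).const_mul (864:ℝ)).mul hC2)).add (((hasDerivAt_pow 4 x).const_mul (480:ℝ)).mul hC2)).add (((hasDerivAt_id x).const_mul (432:ℝ)).mul hS2)).add (((hasDerivAt_pow 3 x).const_mul (768:ℝ)).mul hS2)).add (((hasDerivAt_pow 5 x).const_mul (96:ℝ)).mul hS2)).add (hasDerivAt_const x (108:ℝ))).add ((hasDerivAt_pow 2 x).const_mul (468:ℝ))).add ((hasDerivAt_pow 4 x).const_mul (240:ℝ)))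
  exact H.congr_deriv (by simp only [Q3, id_eq]; push_cast; ring)

lemma hasDerivAt_Q3 (x : ℝ) : HasDerivAt Q3 (Q4 x) x := by
  have hC4 := hCosh 4 x
  have hS4 := hSinh 4 x
  have hC2 := hCosh 2 x
  have hS2 := hSinh 2 x
  have H := (((((((((((((((hasDerivAt_id x).const_mul (-1224:ℝ)).mul hC4).add (((hasDerivAt_pow 3 x).const_mul (960:ℝ)).mul hC4)).add (hS4.const_mul (-792:ℝ))).add (((hasDerivAt_pow 2 x).const_mul (720:ℝ)).mul hS4)).add (((hasDerivAt_pow 4 x).const_mul (576:ℝ)).mul hS4)).add (((hasDerivAt_id x).const_mul (2592:ℝ)).mul hC2)).add (((hasDerivAt_pow 3 x).const_mul (3456:ℝ)).mul hC2)).add (((hasDerivAt_pow 5 x).const_mul (192:ℝ)).mul hC2)).add (hS2.const_mul (432:ℝ))).add (((hasDerivAt_pow 2 x).const_mul (4032:ℝ)).mul hS2)).add (((hasDerivAt_pow 4 x).const_mul (1440:ℝ)).mul hS2)).add ((hasDerivAt_id x).const_mul (936:ℝ))).add ((hasDerivAt_pow 3 x).const_mul (960:ℝ)))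
  exact H.congr_deriv (by simp only [Q4, id_eq]; push_cast; ring)

lemma hasDerivAt_Q4 (x : ℝ) : HasDerivAt Q4 (Q5 x) x := by
  have hC4 := hCosh 4 x
  have hS4 := hSinh 4 x
  have hC2 := hCosh 2 x
  have hS2 := hSinh 2 x
  have H := (((((((((((((hC4.const_mul (-4392:ℝ)).add (((hasDerivAt_pow 2 x).const_mul (5760:ℝ)).mul hC4)).add (((hasDerivAt_pow 4 x).const_mul (2304:ℝ)).mul hC4)).add (((hasDerivAt_id x).const_mul (-3456:ℝ)).mul hS4)).add (((hasDerivAt_pow 3 x).const_mul (6144:ℝ)).mul hS4)).add (hC2.const_mul (3456:ℝ))).add (((hasDerivAt_pow 2 x).const_mul (18432:ℝ)).mul hC2)).add (((hasDerivAt_pow 4 x).const_mul (3840:ℝ)).mul hC2)).add (((hasDerivAt_id x).const_mul (13248:ℝ)).mul hS2)).add (((hasDerivAt_pow 3 x).const_mul (12672:ℝ)).mul hS2)).add (((hasDerivAt_pow 5 x).const_mul (384:ℝ)).mul hS2)).add (hasDerivAt_const x (936:ℝ))).add ((hasDerivAt_pow 2 x).const_mul (2880:ℝ)))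
  exact H.congr_deriv (by simp only [Q5, id_eq]; push_cast; ring)

lemma hasDerivAt_Q5 (x : ℝ) : HasDerivAt Q5 (Q6 x) x := by
  have hC4 := hCosh 4 x
  have hS4 := hSinh 4 x
  have hC2 := hCosh 2 x
  have hS2 := hSinh 2 x
  have H := ((((((((((((((hasDerivAt_id x).const_mul (-2304:ℝ)).mul hC4).add (((hasDerivAt_pow 3 x).const_mul (33792:ℝ)).mul hC4)).add (hS4.const_mul (-21024:ℝ))).add (((hasDerivAt_pow 2 x).const_mul (41472:ℝ)).mul hS4)).add (((hasDerivAt_pow 4 x).const_mul (9216:ℝ)).mul hS4)).add (((hasDerivAt_id x).const_mul (63360:ℝ)).mul hC2)).add (((hasDerivAt_pow 3 x).const_mul (40704:ℝ)).mul hC2)).add (((hasDerivAt_pow 5 x).const_mul (768:ℝ)).mul hC2)).add (hS2.const_mul (20160:ℝ))).add (((hasDerivAt_pow 2 x).const_mul (74880:ℝ)).mul hS2)).add (((hasDerivAt_pow 4 x).const_mul (9600:ℝ)).mul hS2)).add ((hasDerivAt_id x).const_mul (5760:ℝ)))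
  exact H.congr_deriv (by simp only [Q6, id_eq]; push_cast; ring)

lemma hasDerivAt_Q6 (x : ℝ) : HasDerivAt Q6 (Q7 x) x := by
  have hC4 := hCosh 4 x
  have hS4 := hSinh 4 x
  have hC2 := hCosh 2 x
  have hS2 := hSinh 2 x
  have H := ((((((((((((hC4.const_mul (-86400:ℝ)).add (((hasDerivAt_pow 2 x).const_mul (267264:ℝ)).mul hC4)).add (((hasDerivAt_pow 4 x).const_mul (36864:ℝ)).mul hC4)).add (((hasDerivAt_id x).const_mul (73728:ℝ)).mul hS4)).add (((hasDerivAt_pow 3 x).const_mul (172032:ℝ)).mul hS4)).add (hC2.const_mul (103680:ℝ))).add (((hasDerivAt_pow 2 x).const_mul (271872:ℝ)).mul hC2)).add (((hasDerivAt_pow 4 x).const_mul (23040:ℝ)).mul hC2)).add (((hasDerivAt_id x).const_mul (276480:ℝ)).mul hS2)).add (((hasDerivAt_pow 3 x).const_mul (119808:ℝ)).mul hS2)).add (((hasDerivAt_pow 5 x).const_mul (1536:ℝ)).mul hS2)).add (hasDerivAt_const x (5760:ℝ)))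
  exact H.congr_deriv (by simp only [Q7, id_eq]; push_cast; ring)

lemma hasDerivAt_Q7 (x : ℝ) : HasDerivAt Q7 (Q8 x) x := by
  have hC4 := hCosh 4 x
  have hS4 := hSinh 4 x
  have hC2 := hCosh 2 x
  have hS2 := hSinh 2 x
  have H := (((((((((((((hasDerivAt_id x).const_mul (829440:ℝ)).mul hC4).add (((hasDerivAt_pow 3 x).const_mul (835584:ℝ)).mul hC4)).add (hS4.const_mul (-271872:ℝ))).add (((hasDerivAt_pow 2 x).const_mul (1585152:ℝ)).mul hS4)).add (((hasDerivAt_pow 4 x).const_mul (147456:ℝ)).mul hS4)).add (((hasDerivAt_id x).const_mul (1096704:ℝ)).mul hC2)).add (((hasDerivAt_pow 3 x).const_mul (331776:ℝ)).mul hC2)).add (((hasDerivAt_pow 5 x).const_mul (3072:ℝ)).mul hC2)).add (hS2.const_mul (483840:ℝ))).add (((hasDerivAt_pow 2 x).const_mul (903168:ℝ)).mul hS2)).add (((hasDerivAt_pow 4 x).const_mul (53760:ℝ)).mul hS2))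
  exact H.congr_deriv (by simp only [Q8, id_eq]; push_cast; ring)

lemma hasDerivAt_Q8 (x : ℝ) : HasDerivAt Q8 (Q9 x) x := by
  have hC4 := hCosh 4 x
  have hS4 := hSinh 4 x
  have hC2 := hCosh 2 x
  have hS2 := hSinh 2 x
  have H := (((((((((((hC4.const_mul (-258048:ℝ)).add (((hasDerivAt_pow 2 x).const_mul (8847360:ℝ)).mul hC4)).add (((hasDerivAt_pow 4 x).const_mul (589824:ℝ)).mul hC4)).add (((hasDerivAt_id x).const_mul (6488064:ℝ)).mul hS4)).add (((hasDerivAt_pow 3 x).const_mul (3932160:ℝ)).mul hS4)).add (hC2.const_mul (2064384:ℝ))).add (((hasDerivAt_pow 2 x).const_mul (2801664:ℝ)).mul hC2)).add (((hasDerivAt_pow 4 x).const_mul (122880:ℝ)).mul hC2)).add (((hasDerivAt_id x).const_mul (3999744:ℝ)).mul hS2)).add (((hasDerivAt_pow 3 x).const_mul (878592:ℝ)).mul hS2)).add (((hasDerivAt_pow 5 x).const_mul (6144:ℝ)).mul hS2))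
  exact H.congr_deriv (by simp only [Q9, id_eq]; push_cast; ring)

lemma Q9_pos (x : ℝ) (hx : 0 < x) : 0 < Q9 x := by
  have hS4 : 0 < Real.sinh (4 * x) := Real.sinh_pos_iff.2 (by linarith)
  have hS2 : 0 < Real.sinh (2 * x) := Real.sinh_pos_iff.2 (by linarith)
  have hC4 : 0 < Real.cosh (4 * x) := Real.cosh_pos _
  have hC2 : 0 < Real.cosh (2 * x) := Real.cosh_pos _
  simp only [Q9]
  positivity

lemma pos_of_hasDerivAt (f g : ℝ → ℝ) (hd : ∀ x, HasDerivAt f (g x) x)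
    (h0 : 0 ≤ f 0) (hp : ∀ x, 0 < x → 0 < g x) : ∀ x, 0 < x → 0 < f x := by
  intro x hx
  have hmono : StrictMonoOn f (Set.Ici (0:ℝ)) := by
    apply strictMonoOn_of_deriv_pos (convex_Ici 0)
    · exact (Differentiable.continuous fun y => (hd y).differentiableAt).continuousOn
    · intro y hy
      rw [interior_Ici] at hy
      rw [(hd y).deriv]
      exact hp y hy
  have := hmono (Set.self_mem_Ici) (Set.mem_Ici.2 hx.le) hx
  linarith

lemma Q1_zero : Q1 0 = 0 := by
  norm_num [Q1]

lemma Q2_zero : Q2 0 = 0 := by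
  norm_num [Q2]

lemma Q3_zero : Q3 0 = 0 := by
  norm_num [Q3]

lemma Q4_zero : Q4 0 = 0 := by
  norm_num [Q4]

lemma Q5_zero : Q5 0 = 0 := by
  norm_num [Q5]

lemma Q6_zero : Q6 0 = 23040 := by
  norm_num [Q6]

lemma Q7_zero : Q7 0 = 0 := by
  norm_num [Q7]

lemma Q8_zero : Q8 0 = 1806336 := by
  norm_num [Q8]

theorem q_pos (h : ℝ) (hh : 0 < h) : 0 < q h := by
  have hp8 := pos_of_hasDerivAt Q8 Q9 hasDerivAt_Q8 (by norm_num [Q8_zero]) (fun x hx => Q9_pos x hx)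
  have hp7 := pos_of_hasDerivAt Q7 Q8 hasDerivAt_Q7 (by norm_num [Q7_zero]) (fun x hx => hp8 x hx)
  have hp6 := pos_of_hasDerivAt Q6 Q7 hasDerivAt_Q6 (by norm_num [Q6_zero]) (fun x hx => hp7 x hx)
  have hp5 := pos_of_hasDerivAt Q5 Q6 hasDerivAt_Q5 (by norm_num [Q5_zero]) (fun x hx => hp6 x hx)
  have hp4 := pos_of_hasDerivAt Q4 Q5 hasDerivAt_Q4 (by norm_num [Q4_zero]) (fun x hx => hp5 x hx)
  have hp3 := pos_of_hasDerivAt Q3 Q4 hasDerivAt_Q3 (by norm_num [Q3_zero]) (fun x hx => hp4 x hx)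
  have hp2 := pos_of_hasDerivAt Q2 Q3 hasDerivAt_Q2 (by norm_num [Q2_zero]) (fun x hx => hp3 x hx)
  have hp1 := pos_of_hasDerivAt Q1 Q2 hasDerivAt_Q1 (by norm_num [Q1_zero]) (fun x hx => hp2 x hx)
  have hp0 := pos_of_hasDerivAt q Q1 hasDerivAt_q (by simp [q]) (fun x hx => hp1 x hx)
  exact hp0 h hh
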